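/- Under the communication setup, the backward controller recursion with horizon M, and the distributed controller with virtual dynamics, for every time step k ∈ {0,…,M−1} the following summed one-step inequality holds: Σ_{i=1}^N ( x_{k+1,i}^T P̆_{k+1,i} x_{k+1,i} + u_{k,i}^T R_{k,i} u_{k,i} ) ≤ Σ_{i=1}^N x_{k,i}^T A_k^T P_{k+1,i} A_k x_{k,i} = Σ_{i=1}^N x_{k,i}^T ( P̆_{k,i} − N Q_k ) x_{k,i}. -/

import Mathlib

/-!
Under the LQR gain, the cost `x⁺ᵀ P̆ x⁺ + uᵀ R u` of agent `i` equals `yᵀ P̄ y` for its fused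
prior `y` (completion of squares together with the Woodbury identity
`(P̆⁻¹ + B R⁻¹ Bᵀ)⁻¹ = P̆ - P̆ B (R + Bᵀ P̆ B)⁻¹ Bᵀ P̆`). Writing `y_i = P̄_i⁻¹ z_i` with
`z_i = Σ_j ω_ji P_j A x_j`, convexity of the quadratic form of `P̄_i⁻¹` (the weights into agent `i`
sum to at most one) bounds `z_iᵀ P̄_i⁻¹ z_i` by `Σ_j ω_ji (P_j A x_j)ᵀ P̄_i⁻¹ (P_j A x_j)`. Summing
over `i` and exchanging the sums turns `Σ_i ω_ji P̄_i⁻¹` into `P_j⁻¹`, which leaves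
`Σ_j (A x_j)ᵀ P_j (A x_j)`. Backward induction on the time step makes every matrix involved
positive definite.
-/

open Matrix Finset

section LQR

variable {n m : Type*} [Fintype n] [Fintype m]

lemma Matrix.dotProduct_mulVec_transpose_mul_mul {R : Type*} [CommSemiring R]
    (A : Matrix m n R) (P : Matrix m m R) (x : n → R) :
    x ⬝ᵥ ((Aᵀ * P * A) *ᵥ x) = (A *ᵥ x) ⬝ᵥ (P *ᵥ (A *ᵥ x)) := by
  rw [← mulVec_mulVec, ← mulVec_mulVec, dotProduct_mulVec, vecMul_transpose]

lemma Matrix.dotProduct_mulVec_sum_smul_le {ι : Type*} {M : Matrix n n ℝ} (hM : M.PosSemidef)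
    {s : Finset ι} {w : ι → ℝ} (hw : ∀ j ∈ s, 0 ≤ w j) (hw_sum : ∑ j ∈ s, w j ≤ 1)
    (v : ι → n → ℝ) :
    (∑ j ∈ s, w j • v j) ⬝ᵥ (M *ᵥ ∑ j ∈ s, w j • v j) ≤
      ∑ j ∈ s, w j * (v j ⬝ᵥ (M *ᵥ v j)) := by
  set z := ∑ j ∈ s, w j • v j
  have hq : ∀ x, 0 ≤ x ⬝ᵥ (M *ᵥ x) := fun x => by simpa using hM.dotProduct_mulVec_nonneg x
  have hleft : ∑ j ∈ s, w j * (v j ⬝ᵥ (M *ᵥ z)) = z ⬝ᵥ (M *ᵥ z) := by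
    simp only [z, sum_dotProduct, smul_dotProduct, smul_eq_mul]
  have hright : ∑ j ∈ s, w j * (z ⬝ᵥ (M *ᵥ v j)) = z ⬝ᵥ (M *ᵥ z) := by
    simp only [z, mulVec_sum, mulVec_smul, dotProduct_sum, dotProduct_smul, smul_eq_mul]
  have hvar : 0 ≤ ∑ j ∈ s, w j * ((v j - z) ⬝ᵥ (M *ᵥ (v j - z))) :=
    sum_nonneg fun j hj => mul_nonneg (hw j hj) (hq _)
  simp only [mulVec_sub, dotProduct_sub, sub_dotProduct, mul_sub, sum_sub_distrib, ← sum_mul,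
    hleft, hright] at hvar
  nlinarith [hq z]

lemma Matrix.PosDef.add_transpose_mul_mul {R : Matrix n n ℝ} {P : Matrix m m ℝ}
    (hR : R.PosDef) (hP : P.PosSemidef) (B : Matrix m n ℝ) : (R + Bᵀ * P * B).PosDef := by
  simpa [conjTranspose_eq_transpose_of_trivial] using
    hR.add_posSemidef (hP.conjTranspose_mul_mul_same B)

lemma Matrix.PosDef.transpose_mul_mul_add_smul {Q : Matrix n n ℝ} {P : Matrix m m ℝ}
    (hQ : Q.PosDef) {c : ℝ} (hc : 0 < c) (hP : P.PosSemidef) (A : Matrix m n ℝ) :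
    (Aᵀ * P * A + c • Q).PosDef := by
  simpa [conjTranspose_eq_transpose_of_trivial] using
    (hQ.smul hc).posSemidef_add (hP.conjTranspose_mul_mul_same A)

variable [DecidableEq n] [DecidableEq m]

lemma Matrix.PosDef.inv_inv {P : Matrix n n ℝ} (hP : P.PosDef) : P⁻¹⁻¹ = P :=
  nonsing_inv_nonsing_inv P hP.det_pos.ne'.isUnit

lemma Matrix.posDef_sum_smul_inv {ι : Type*} {s : Finset ι} {i : ι} (hi : i ∈ s) {c : ι → ℝ}
    (hc : ∀ j ∈ s, 0 < c j) {P : ι → Matrix n n ℝ} (hP : ∀ j ∈ s, (P j).PosDef) :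
    (∑ j ∈ s, c j • (P j)⁻¹).PosDef :=
  posDef_sum ⟨i, hi⟩ fun j hj => (hP j hj).inv.smul (hc j hj)

lemma Matrix.PosDef.inv_add_mul_inv_mul_transpose {P : Matrix n n ℝ} {R : Matrix m m ℝ}
    (hP : P.PosDef) (hR : R.PosDef) (B : Matrix n m ℝ) : (P⁻¹ + B * R⁻¹ * Bᵀ).PosDef := by
  simpa [conjTranspose_eq_transpose_of_trivial] using
    hP.inv.add_posSemidef (hR.inv.posSemidef.mul_mul_conjTranspose_same B)

noncomputable def lqrGain (P : Matrix n n ℝ) (R : Matrix m m ℝ) (B : Matrix n m ℝ) :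
    Matrix m n ℝ :=
  -((R + Bᵀ * P * B)⁻¹ * (Bᵀ * P))

lemma inv_add_mul_inv_mul_transpose_inv {P : Matrix n n ℝ} {R : Matrix m m ℝ}
    (hP : P.PosDef) (hR : R.PosDef) (B : Matrix n m ℝ) :
    (P⁻¹ + B * R⁻¹ * Bᵀ)⁻¹ = P + P * B * lqrGain P R B := by
  rw [add_mul_mul_inv_eq_sub _ _ _ _ hP.inv.isUnit hR.inv.isUnit
    (by simpa [hP.inv_inv, hR.inv_inv] using (hR.add_transpose_mul_mul hP.posSemidef B).isUnit),
    hP.inv_inv, hR.inv_inv]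
  simp [lqrGain, Matrix.mul_assoc, sub_eq_add_neg]

lemma closedLoop_cost_eq {P : Matrix n n ℝ} {R : Matrix m m ℝ} (hP : P.PosDef) (hR : R.PosDef)
    (B : Matrix n m ℝ) {Pbar : Matrix n n ℝ} (hPbar : Pbar = (P⁻¹ + B * R⁻¹ * Bᵀ)⁻¹)
    (y : n → ℝ) :
    (y + B *ᵥ (lqrGain P R B *ᵥ y)) ⬝ᵥ (P *ᵥ (y + B *ᵥ (lqrGain P R B *ᵥ y)))
      + (lqrGain P R B *ᵥ y) ⬝ᵥ (R *ᵥ (lqrGain P R B *ᵥ y)) = y ⬝ᵥ (Pbar *ᵥ y) := by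
  have hS : IsUnit (R + Bᵀ * P * B).det :=
    (hR.add_transpose_mul_mul hP.posSemidef B).det_pos.ne'.isUnit
  set v := lqrGain P R B *ᵥ y
  have hgain : (R + Bᵀ * P * B) *ᵥ v = -((Bᵀ * P) *ᵥ y) := by
    rw [mulVec_mulVec, lqrGain, Matrix.mul_neg, ← Matrix.mul_assoc, mul_nonsing_inv _ hS,
      Matrix.one_mul, neg_mulVec]
  have hcross : (B *ᵥ v) ⬝ᵥ (P *ᵥ y) + (B *ᵥ v) ⬝ᵥ (P *ᵥ (B *ᵥ v)) + v ⬝ᵥ (R *ᵥ v) = 0 := by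
    have h0 : v ⬝ᵥ ((Bᵀ * P) *ᵥ y + (R + Bᵀ * P * B) *ᵥ v) = 0 := by
      rw [hgain, add_neg_cancel, dotProduct_zero]
    rw [← h0]
    simp only [add_mulVec, ← mulVec_mulVec, dotProduct_add, dotProduct_mulVec v Bᵀ,
      vecMul_transpose]
    ring
  rw [hPbar, inv_add_mul_inv_mul_transpose_inv hP hR, add_mulVec, ← mulVec_mulVec,
    ← mulVec_mulVec]
  simp only [mulVec_add, dotProduct_add, add_dotProduct]
  linear_combination hcross

end LQR

lemma Finset.sum_le_one_of_le_one_div_card {ι : Type*} {s : Finset ι} {f : ι → ℝ}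
    (h : ∀ j ∈ s, f j ≤ 1 / #s) : ∑ j ∈ s, f j ≤ 1 :=
  (sum_le_card_nsmul s f _ h).trans (by rw [nsmul_eq_mul, mul_one_div]; exact div_self_le_one _)

lemma sum_fused_quadForm_le {ι n : Type*} [Fintype ι] [DecidableEq ι] [Fintype n] [DecidableEq n]
    {nbr : ι → Finset ι} {ω : ι → ι → ℝ} (hself : ∀ i, i ∈ nbr i)
    (hω : ∀ i, ∀ j ∈ nbr i, 0 < ω i j)
    (hω_col : ∀ i, ∑ j ∈ univ.filter (fun j => i ∈ nbr j), ω j i ≤ 1)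
    {Pbar Pm : ι → Matrix n n ℝ} (hPbar : ∀ i, (Pbar i).PosDef)
    (hPm : ∀ i, Pm i = (∑ j ∈ nbr i, ω i j • (Pbar j)⁻¹)⁻¹) (a y : ι → n → ℝ)
    (hy : ∀ i, y i = ∑ j ∈ univ.filter (fun j => i ∈ nbr j),
      ω j i • ((Pbar i)⁻¹ *ᵥ (Pm j *ᵥ a j))) :
    ∑ i, y i ⬝ᵥ (Pbar i *ᵥ y i) ≤ ∑ j, a j ⬝ᵥ (Pm j *ᵥ a j) := by
  have hF : ∀ i, (∑ j ∈ nbr i, ω i j • (Pbar j)⁻¹).PosDef := fun i =>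
    posDef_sum_smul_inv (hself i) (hω i) fun j _ => hPbar j
  have hPm_inv : ∀ i, (Pm i)⁻¹ = ∑ j ∈ nbr i, ω i j • (Pbar j)⁻¹ := fun i => by
    rw [hPm, (hF i).inv_inv]
  have hPm_det : ∀ i, IsUnit (Pm i).det := fun i => (hPm i ▸ (hF i).inv).det_pos.ne'.isUnit
  set x := fun j => Pm j *ᵥ a j
  set z := fun i => ∑ j ∈ univ.filter (fun j => i ∈ nbr j), ω j i • x j
  calc ∑ i, y i ⬝ᵥ (Pbar i *ᵥ y i)
      = ∑ i, z i ⬝ᵥ ((Pbar i)⁻¹ *ᵥ z i) := sum_congr rfl fun i _ => by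
        have : y i = (Pbar i)⁻¹ *ᵥ z i := by simp only [hy, z, x, mulVec_sum, mulVec_smul]
        rw [this, mulVec_mulVec, mul_nonsing_inv _ (hPbar i).det_pos.ne'.isUnit, one_mulVec,
          dotProduct_comm]
    _ ≤ ∑ i, ∑ j ∈ univ.filter (fun j => i ∈ nbr j), ω j i * (x j ⬝ᵥ ((Pbar i)⁻¹ *ᵥ x j)) :=
        sum_le_sum fun i _ => dotProduct_mulVec_sum_smul_le (hPbar i).inv.posSemidef
          (fun j hj => (hω j i (mem_filter.mp hj).2).le) (hω_col i) x
    _ = ∑ j, ∑ i ∈ nbr j, ω j i * (x j ⬝ᵥ ((Pbar i)⁻¹ *ᵥ x j)) := sum_comm' (by simp)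
    _ = ∑ j, x j ⬝ᵥ ((Pm j)⁻¹ *ᵥ x j) := by
        simp only [hPm_inv, sum_mulVec, smul_mulVec, dotProduct_sum, dotProduct_smul, smul_eq_mul]
    _ = ∑ j, a j ⬝ᵥ (Pm j *ᵥ a j) := sum_congr rfl fun j _ => by
        rw [mulVec_mulVec, nonsing_inv_mul _ (hPm_det j), one_mulVec, dotProduct_comm]

theorem aggregated_one_step_inequality_general {n N : ℕ} (m : Fin N → ℕ)
    (nbr : Fin N → Finset (Fin N)) (hself : ∀ i, i ∈ nbr i)
    (ω : Fin N → Fin N → ℝ)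
    (hω : ∀ i, ∀ j ∈ nbr i, 0 < ω i j ∧
      ω i j ≤ 1 / ((Finset.univ.filter (fun l => j ∈ nbr l)).card : ℝ))
    (M : ℕ)
    (A : ℕ → Matrix (Fin n) (Fin n) ℝ)
    (B : ∀ _ : ℕ, ∀ i : Fin N, Matrix (Fin n) (Fin (m i)) ℝ)
    (Q : ℕ → Matrix (Fin n) (Fin n) ℝ) (hQ : ∀ k, (Q k).PosDef)
    (R : ∀ _ : ℕ, ∀ i : Fin N, Matrix (Fin (m i)) (Fin (m i)) ℝ)
    (hR : ∀ k i, (R k i).PosDef)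
    (Pbar Pm Pbrv : ℕ → Fin N → Matrix (Fin n) (Fin n) ℝ)
    (hPbrvM : ∀ i, Pbrv M i = (N : ℝ) • Q M)
    (hPbar : ∀ k < M, ∀ i,
      Pbar (k+1) i = ((Pbrv (k+1) i)⁻¹ + B k i * (R k i)⁻¹ * (B k i)ᵀ)⁻¹)
    (hPm : ∀ k < M, ∀ i, Pm (k+1) i = (∑ j ∈ nbr i, ω i j • (Pbar (k+1) j)⁻¹)⁻¹)
    (hPbrv : ∀ k < M, ∀ i, Pbrv k i = (A k)ᵀ * Pm (k+1) i * A k + (N : ℝ) • Q k)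
    (xv : ℕ → Fin N → Fin n → ℝ)
    (u : ∀ _ : ℕ, ∀ i : Fin N, Fin (m i) → ℝ)
    (hxv : ∀ k < M, ∀ i, xv (k+1) i =
      (∑ j ∈ Finset.univ.filter (fun j => i ∈ nbr j),
        ω j i • ((Pbar (k+1) i)⁻¹ *ᵥ (Pm (k+1) j *ᵥ (A k *ᵥ xv k j))))
      + B k i *ᵥ u k i)
    (hu : ∀ k < M, ∀ i, u k i =
      (-((R k i + (B k i)ᵀ * Pbrv (k+1) i * B k i)⁻¹ * ((B k i)ᵀ * Pbrv (k+1) i))) *ᵥ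
      (∑ j ∈ Finset.univ.filter (fun j => i ∈ nbr j),
        ω j i • ((Pbar (k+1) i)⁻¹ *ᵥ (Pm (k+1) j *ᵥ (A k *ᵥ xv k j)))))
    :
    ∀ k < M,
      (∑ i, (xv (k+1) i ⬝ᵥ (Pbrv (k+1) i *ᵥ xv (k+1) i) + u k i ⬝ᵥ (R k i *ᵥ u k i)))
        ≤ ∑ i, xv k i ⬝ᵥ (((A k)ᵀ * Pm (k+1) i * A k) *ᵥ xv k i) ∧
      (∑ i, xv k i ⬝ᵥ (((A k)ᵀ * Pm (k+1) i * A k) *ᵥ xv k i))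
        = ∑ i, xv k i ⬝ᵥ ((Pbrv k i - (N : ℝ) • Q k) *ᵥ xv k i) := by
  have hω_pos : ∀ i, ∀ j ∈ nbr i, 0 < ω i j := fun i j hj => (hω i j hj).1
  have hPbar_pd : ∀ k < M, (∀ i, (Pbrv (k+1) i).PosDef) → ∀ i, (Pbar (k+1) i).PosDef :=
    fun k hk h i => hPbar k hk i ▸ ((h i).inv_add_mul_inv_mul_transpose (hR k i) _).inv
  have hPbrv_pd : ∀ k ≤ M, ∀ i, (Pbrv k i).PosDef := fun k hk => by
    induction hk using Nat.decreasingInduction with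
    | self => exact fun i => hPbrvM i ▸ (hQ M).smul (Nat.cast_pos.2 i.pos)
    | of_succ k hk ih =>
      refine fun i => hPbrv k hk i ▸ (hQ k).transpose_mul_mul_add_smul (Nat.cast_pos.2 i.pos) ?_ _
      exact hPm k hk i ▸ (posDef_sum_smul_inv (hself i) (hω_pos i)
        fun j _ => hPbar_pd k hk ih j).inv.posSemidef
  intro k hk
  refine ⟨?_, sum_congr rfl fun i _ => by rw [hPbrv k hk i, add_sub_cancel_right]⟩
  set y := fun i => ∑ j ∈ univ.filter (fun j => i ∈ nbr j),
    ω j i • ((Pbar (k+1) i)⁻¹ *ᵥ (Pm (k+1) j *ᵥ (A k *ᵥ xv k j)))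
  calc _ = ∑ i, y i ⬝ᵥ (Pbar (k+1) i *ᵥ y i) := sum_congr rfl fun i _ => by
          rw [hxv k hk i, hu k hk i]
          exact closedLoop_cost_eq (hPbrv_pd _ hk i) (hR k i) _ (hPbar k hk i) _
    _ ≤ ∑ j, (A k *ᵥ xv k j) ⬝ᵥ (Pm (k+1) j *ᵥ (A k *ᵥ xv k j)) :=
        sum_fused_quadForm_le hself hω_pos
          (fun i => sum_le_one_of_le_one_div_card fun j hj => (hω j i (mem_filter.1 hj).2).2)
          (hPbar_pd k hk (hPbrv_pd _ hk)) (hPm k hk) _ y fun _ => rfl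
    _ = _ := sum_congr rfl fun i _ => (dotProduct_mulVec_transpose_mul_mul _ _ _).symm

/-- Aggregated one-step descent inequality from the proof of Theorem 2 of the paper:
summing the per-agent inequality over all agents,
`Σ_i (x_{k+1,i}ᵀ P̆_{k+1,i} x_{k+1,i} + u_{k,i}ᵀ R_{k,i} u_{k,i})
  ≤ Σ_i x_{k,i}ᵀ A_kᵀ P_{k+1,i} A_k x_{k,i} = Σ_i x_{k,i}ᵀ (P̆_{k,i} − N Q_k) x_{k,i}`. -/
theorem aggregated_one_step_inequality {n N : ℕ} (hN : 0 < N) (m : Fin N → ℕ)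
    (nbr : Fin N → Finset (Fin N)) (hself : ∀ i, i ∈ nbr i)
    (ω : Fin N → Fin N → ℝ)
    (hω : ∀ i, ∀ j ∈ nbr i, 0 < ω i j ∧
      ω i j ≤ 1 / ((Finset.univ.filter (fun l => j ∈ nbr l)).card : ℝ))
    (M : ℕ)
    (A : ℕ → Matrix (Fin n) (Fin n) ℝ)
    (B : ∀ _ : ℕ, ∀ i : Fin N, Matrix (Fin n) (Fin (m i)) ℝ)
    (Q : ℕ → Matrix (Fin n) (Fin n) ℝ) (hQ : ∀ k, (Q k).PosDef)
    (R : ∀ _ : ℕ, ∀ i : Fin N, Matrix (Fin (m i)) (Fin (m i)) ℝ)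
    (hR : ∀ k i, (R k i).PosDef)
    (Pbar Pm Pbrv : ℕ → Fin N → Matrix (Fin n) (Fin n) ℝ)
    (hPbrvM : ∀ i, Pbrv M i = (N : ℝ) • Q M)
    (hPbar : ∀ k < M, ∀ i,
      Pbar (k+1) i = ((Pbrv (k+1) i)⁻¹ + B k i * (R k i)⁻¹ * (B k i)ᵀ)⁻¹)
    (hPm : ∀ k < M, ∀ i, Pm (k+1) i = (∑ j ∈ nbr i, ω i j • (Pbar (k+1) j)⁻¹)⁻¹)
    (hPbrv : ∀ k < M, ∀ i, Pbrv k i = (A k)ᵀ * Pm (k+1) i * A k + (N : ℝ) • Q k)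
    (xv : ℕ → Fin N → Fin n → ℝ)
    (u : ∀ _ : ℕ, ∀ i : Fin N, Fin (m i) → ℝ)
    (hxv : ∀ k < M, ∀ i, xv (k+1) i =
      (∑ j ∈ Finset.univ.filter (fun j => i ∈ nbr j),
        ω j i • ((Pbar (k+1) i)⁻¹ *ᵥ (Pm (k+1) j *ᵥ (A k *ᵥ xv k j))))
      + B k i *ᵥ u k i)
    (hu : ∀ k < M, ∀ i, u k i =
      (-((R k i + (B k i)ᵀ * Pbrv (k+1) i * B k i)⁻¹ * ((B k i)ᵀ * Pbrv (k+1) i))) *ᵥ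
      (∑ j ∈ Finset.univ.filter (fun j => i ∈ nbr j),
        ω j i • ((Pbar (k+1) i)⁻¹ *ᵥ (Pm (k+1) j *ᵥ (A k *ᵥ xv k j)))))
    :
    ∀ k < M,
      (∑ i, (xv (k+1) i ⬝ᵥ (Pbrv (k+1) i *ᵥ xv (k+1) i) + u k i ⬝ᵥ (R k i *ᵥ u k i)))
        ≤ ∑ i, xv k i ⬝ᵥ (((A k)ᵀ * Pm (k+1) i * A k) *ᵥ xv k i) ∧
      (∑ i, xv k i ⬝ᵥ (((A k)ᵀ * Pm (k+1) i * A k) *ᵥ xv k i))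
        = ∑ i, xv k i ⬝ᵥ ((Pbrv k i - (N : ℝ) • Q k) *ᵥ xv k i) :=
  aggregated_one_step_inequality_general m nbr hself ω hω M A B Q hQ R hR Pbar Pm Pbrv hPbrvM hPbar
    hPm hPbrv xv u hxv hu
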